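/- arXiv:2008.12942 — 3 statements merged into one kernel-verified Lean document; each statement's English description precedes it below -/
import Mathlib

section
/- Let α, β > 0, c > 0, D > 0, φ_v = sqrt(1+4/c²) and φ_w = sqrt(1+4/(c²D²)). If there exists z* > 0 such that F(z*, c) = 0, where F(z, c) = (2√2/3)(1 + e^{−2z}) − (8α/(c³φ_v³))(1 + e^{−2z} − 2e^{−(1+φ_v)z} − 2φ_v z e^{−(1+φ_v)z}) − (8β/(c³D²φ_w³))(1 + e^{−2z} − 2e^{−(1+φ_w)z} − 2φ_w z e^{−(1+φ_w)z}), then necessarily 2√2/3 < 8α/(c³φ_v³) + 8β/(c³D²φ_w³), i.e., (√2 c)/12 < α/((c²+4)φ_v) + β/((c²D²+4)φ_w). -/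
theorem saddle_node_necessary_condition (α β D c : ℝ)
    (hα : 0 < α) (hβ : 0 < β) (hD : 0 < D) (hc : 0 < c)
    (φv φw : ℝ) (hφv : φv = Real.sqrt (1 + 4 / c ^ 2))
    (hφw : φw = Real.sqrt (1 + 4 / (c ^ 2 * D ^ 2)))
    (hzero : ∃ zstar > (0 : ℝ),
      (2 * Real.sqrt 2 / 3) * (1 + Real.exp (-2 * zstar))
        - (8 * α / (c ^ 3 * φv ^ 3)) *
            (1 + Real.exp (-2 * zstar) - 2 * Real.exp (-(1 + φv) * zstar)
              - 2 * φv * zstar * Real.exp (-(1 + φv) * zstar))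
        - (8 * β / (c ^ 3 * D ^ 2 * φw ^ 3)) *
            (1 + Real.exp (-2 * zstar) - 2 * Real.exp (-(1 + φw) * zstar)
              - 2 * φw * zstar * Real.exp (-(1 + φw) * zstar)) = 0) :
    2 * Real.sqrt 2 / 3 < 8 * α / (c ^ 3 * φv ^ 3) + 8 * β / (c ^ 3 * D ^ 2 * φw ^ 3) ∧
    Real.sqrt 2 * c / 12 < α / ((c ^ 2 + 4) * φv) + β / ((c ^ 2 * D ^ 2 + 4) * φw) := by
  obtain ⟨z, hz, hF⟩ := hzero
  have hφvpos : 0 < φv := by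
    rw [hφv]; exact Real.sqrt_pos.mpr (by positivity)
  have hφwpos : 0 < φw := by
    rw [hφw]; exact Real.sqrt_pos.mpr (by positivity)
  have hφv2 : φv ^ 2 = 1 + 4 / c ^ 2 := by
    rw [hφv, Real.sq_sqrt (by positivity : (0:ℝ) ≤ 1 + 4 / c ^ 2)]
  have hφw2 : φw ^ 2 = 1 + 4 / (c ^ 2 * D ^ 2) := by
    rw [hφw, Real.sq_sqrt (by positivity : (0:ℝ) ≤ 1 + 4 / (c ^ 2 * D ^ 2))]
  have ha : 0 < 8 * α / (c ^ 3 * φv ^ 3) := by positivity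
  have hb : 0 < 8 * β / (c ^ 3 * D ^ 2 * φw ^ 3) := by positivity
  set a := 8 * α / (c ^ 3 * φv ^ 3) with ha_def
  set b := 8 * β / (c ^ 3 * D ^ 2 * φw ^ 3) with hb_def
  have hS : 0 < 1 + Real.exp (-2 * z) := by positivity
  have hev : 0 < Real.exp (-(1 + φv) * z) := Real.exp_pos _
  have hew : 0 < Real.exp (-(1 + φw) * z) := Real.exp_pos _
  have h1 : 2 * Real.sqrt 2 / 3 < a + b := by
    by_contra h
    push_neg at h
    nlinarith [mul_pos ha hev, mul_pos hb hew,
      mul_pos (mul_pos (mul_pos ha hφvpos) hz) hev,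
      mul_pos (mul_pos (mul_pos hb hφwpos) hz) hew,
      mul_nonneg (sub_nonneg.mpr h) hS.le]
  refine ⟨h1, ?_⟩
  have hc2v : c ^ 2 * φv ^ 2 = c ^ 2 + 4 := by
    rw [hφv2]; field_simp
  have hc2w : c ^ 2 * D ^ 2 * φw ^ 2 = c ^ 2 * D ^ 2 + 4 := by
    rw [hφw2]; field_simp
  have hcv : c ^ 3 * φv ^ 3 = c * φv * (c ^ 2 + 4) := by
    rw [← hc2v]; ring
  have hcw : c ^ 3 * D ^ 2 * φw ^ 3 = c * φw * (c ^ 2 * D ^ 2 + 4) := by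
    rw [← hc2w]; ring
  have haeq : α / ((c ^ 2 + 4) * φv) = c / 8 * a := by
    rw [ha_def, hcv]
    field_simp
  have hbeq : β / ((c ^ 2 * D ^ 2 + 4) * φw) = c / 8 * b := by
    rw [hb_def, hcw]
    field_simp
  rw [haeq, hbeq]
  nlinarith [mul_pos (sub_pos.mpr h1) hc]
end

section
/- Suppose y₁, y₂, y₃ > 0 and c > 0 satisfy the four interface conditions of a traveling 2-pulse solution with φ_w = φ_v (i.e., D = 1, single effective inhibitor with coefficient α+β ≠ 0): (α+β)V̄ᵢ + γ + (−1)ⁱ(√2/3)c = 0 for i = 1,…,4, where V̄ᵢ are given by V̄₁ = 1/φ − ((1+φ)/φ)e^{(1−φ)y₁}(1 − e^{(1−φ)y₂}(1 − e^{(1−φ)y₃})), V̄₂ = ((1+φ)/φ)e^{(1−φ)y₂}(1 − e^{(1−φ)y₃}) + ((1−φ)/φ)e^{−(1+φ)y₁} − 1/φ, V̄₃ = 1/φ − ((1+φ)/φ)e^{(1−φ)y₃} − ((1−φ)/φ)e^{−(1+φ)y₂}(1 − e^{−(1+φ)y₁}), V̄₄ = ((1−φ)/φ)e^{−(1+φ)y₃}(1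 − e^{−(1+φ)y₂}(1 − e^{−(1+φ)y₁})) − 1/φ, with φ > 1. Then a contradiction follows; i.e., no such solution exists. -/
lemma exp_comb_anti (p q s t : ℝ) (hp : 0 < p) (hpq : p < q) (hs : 0 ≤ s) (hst : s < t) :
    q * Real.exp (-(p*t)) - p * Real.exp (-(q*t)) < q * Real.exp (-(p*s)) - p * Real.exp (-(q*s)) := by
  have hanti : StrictAntiOn (fun y : ℝ => q * Real.exp (-(p*y)) - p * Real.exp (-(q*y))) (Set.Ici 0) := by
    apply strictAntiOn_of_deriv_neg (convex_Ici 0)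
    · fun_prop
    · intro x hx
      rw [interior_Ici] at hx
      have hd : HasDerivAt (fun y : ℝ => q * Real.exp (-(p*y)) - p * Real.exp (-(q*y)))
          (q * (Real.exp (-(p*x)) * (-p)) - p * (Real.exp (-(q*x)) * (-q))) x := by
        have h1 : HasDerivAt (fun y : ℝ => -(p*y)) (-p) x := by
          simpa using (hasDerivAt_id x).const_mul (-p)
        have h2 : HasDerivAt (fun y : ℝ => -(q*y)) (-q) x := by
          simpa using (hasDerivAt_id x).const_mul (-q)
        exact ((h1.exp).const_mul q).sub ((h2.exp).const_mul p)
      rw [hd.deriv]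
      have hlt : Real.exp (-(q*x)) < Real.exp (-(p*x)):= by
        apply Real.exp_lt_exp.mpr
        have hx' : 0 < x := Set.mem_Ioi.mp hx
        nlinarith [mul_lt_mul_of_pos_right hpq hx']
      nlinarith [mul_pos hp (hp.trans hpq), hlt, mul_lt_mul_of_pos_left hlt (mul_pos hp (hp.trans hpq))]
  exact hanti (Set.mem_Ici.mpr hs) (Set.mem_Ici.mpr (le_trans hs hst.le)) hst

lemma exp_comb_anti_le (p q s t : ℝ) (hp : 0 < p) (hpq : p < q) (hs : 0 ≤ s) (hst : s ≤ t) :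
    q * Real.exp (-(p*t)) - p * Real.exp (-(q*t)) ≤ q * Real.exp (-(p*s)) - p * Real.exp (-(q*s)) := by
  rcases eq_or_lt_of_le hst with h | h
  · rw [h]
  · exact (exp_comb_anti p q s t hp hpq hs h).le

set_option maxHeartbeats 2000000 in
theorem no_two_pulse_for_equal_rates (φ α β γ c y₁ y₂ y₃ : ℝ)
    (hφ : 1 < φ) (hαβ : α + β ≠ 0) (hc : 0 < c)
    (h₁ : 0 < y₁) (h₂ : 0 < y₂) (h₃ : 0 < y₃)
    (V₁ V₂ V₃ V₄ : ℝ)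
    (hV₁ : V₁ = 1 / φ - ((1 + φ) / φ) * Real.exp ((1 - φ) * y₁) *
      (1 - Real.exp ((1 - φ) * y₂) * (1 - Real.exp ((1 - φ) * y₃))))
    (hV₂ : V₂ = ((1 + φ) / φ) * Real.exp ((1 - φ) * y₂) * (1 - Real.exp ((1 - φ) * y₃))
      + ((1 - φ) / φ) * Real.exp (-(1 + φ) * y₁) - 1 / φ)
    (hV₃ : V₃ = 1 / φ - ((1 + φ) / φ) * Real.exp ((1 - φ) * y₃)
      - ((1 - φ) / φ) * Real.exp (-(1 + φ) * y₂) * (1 - Real.exp (-(1 + φ) * y₁)))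
    (hV₄ : V₄ = ((1 - φ) / φ) * Real.exp (-(1 + φ) * y₃) *
      (1 - Real.exp (-(1 + φ) * y₂) * (1 - Real.exp (-(1 + φ) * y₁))) - 1 / φ)
    (h1 : (α + β) * V₁ + γ - Real.sqrt 2 / 3 * c = 0)
    (h2 : (α + β) * V₂ + γ + Real.sqrt 2 / 3 * c = 0)
    (h3 : (α + β) * V₃ + γ - Real.sqrt 2 / 3 * c = 0)
    (h4 : (α + β) * V₄ + γ + Real.sqrt 2 / 3 * c = 0) :
    False := by
  have hφ0 : (0:ℝ) < φ := by linarith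
  have hφne : φ ≠ 0 := ne_of_gt hφ0
  have hp : (0:ℝ) < φ - 1 := by linarith
  have hpq : φ - 1 < φ + 1 := by linarith
  have e13 : V₁ = V₃ := mul_left_cancel₀ hαβ (by linarith)
  have e24 : V₂ = V₄ := mul_left_cancel₀ hαβ (by linarith)
  subst hV₁ hV₂ hV₃ hV₄
  simp only [show (1-φ)*y₁ = -((φ-1)*y₁) from by ring, show (1-φ)*y₂ = -((φ-1)*y₂) from by ring,
      show (1-φ)*y₃ = -((φ-1)*y₃) from by ring, show -(1+φ)*y₁ = -((φ+1)*y₁) from by ring,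
      show -(1+φ)*y₂ = -((φ+1)*y₂) from by ring, show -(1+φ)*y₃ = -((φ+1)*y₃) from by ring] at e13 e24
  set a₁ := Real.exp (-((φ-1)*y₁)) with ha₁def
  set a₂ := Real.exp (-((φ-1)*y₂)) with ha₂def
  set a₃ := Real.exp (-((φ-1)*y₃)) with ha₃def
  set b₁ := Real.exp (-((φ+1)*y₁)) with hb₁def
  set b₂ := Real.exp (-((φ+1)*y₂)) with hb₂def
  set b₃ := Real.exp (-((φ+1)*y₃)) with hb₃def
  have ha₁ : 0 < a₁ := Real.exp_pos _
  have ha₂ : 0 < a₂ := Real.exp_pos _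
  have ha₃ : 0 < a₃ := Real.exp_pos _
  have hb₁ : 0 < b₁ := Real.exp_pos _
  have hb₂ : 0 < b₂ := Real.exp_pos _
  have hb₃ : 0 < b₃ := Real.exp_pos _
  have ha₁1 : a₁ < 1 := Real.exp_lt_one_iff.mpr (by nlinarith)
  have ha₂1 : a₂ < 1 := Real.exp_lt_one_iff.mpr (by nlinarith)
  have ha₃1 : a₃ < 1 := Real.exp_lt_one_iff.mpr (by nlinarith)
  have hb₁1 : b₁ < 1 := Real.exp_lt_one_iff.mpr (by nlinarith)
  have hb₂1 : b₂ < 1 := Real.exp_lt_one_iff.mpr (by nlinarith)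
  have hb₃1 : b₃ < 1 := Real.exp_lt_one_iff.mpr (by nlinarith)
  field_simp at e13 e24
  -- Identity 1 : difference combination
  have E1 : ((φ+1) * a₃ - (φ-1) * b₃) - ((φ+1) * a₁ - (φ-1) * b₁)
      = (φ+1)*a₂*(1-a₁)*(1-a₃) + (φ-1)*b₂*(1-b₁)*(1-b₃) := by
    linear_combination e13 - e24
  -- Identity 2 : sum combination
  have E2 : ((φ+1) * a₂ - (φ-1) * b₂) - ((φ+1) * (a₁*a₂*a₃) - (φ-1) * (b₁*b₂*b₃))
      = (φ+1)*(1-a₂)*(a₁-a₃) + (φ-1)*(1-b₂)*(b₁-b₃) := by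
    linear_combination e13 + e24
  -- Step 1: y₃ < y₁
  have hE1pos : 0 < (φ+1)*a₂*(1-a₁)*(1-a₃) + (φ-1)*b₂*(1-b₁)*(1-b₃) := by
    have t1 : 0 < (φ+1)*a₂*(1-a₁)*(1-a₃) :=
      mul_pos (mul_pos (mul_pos (by linarith) ha₂) (by linarith)) (by linarith)
    have t2 : 0 < (φ-1)*b₂*(1-b₁)*(1-b₃) :=
      mul_pos (mul_pos (mul_pos (by linarith) hb₂) (by linarith)) (by linarith)
    linarith
  have hy31 : y₃ < y₁ := by
    by_contra hle
    push_neg at hle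
    have := exp_comb_anti_le (φ-1) (φ+1) y₁ y₃ hp hpq h₁.le hle
    rw [← ha₁def, ← ha₃def, ← hb₁def, ← hb₃def] at this
    linarith
  -- Step 2: contradiction
  have ha13 : a₁ < a₃ := by
    rw [ha₁def, ha₃def]
    exact Real.exp_lt_exp.mpr (by nlinarith)
  have hb13 : b₁ < b₃ := by
    rw [hb₁def, hb₃def]
    exact Real.exp_lt_exp.mpr (by nlinarith)
  have key2 : (φ+1) * Real.exp (-((φ-1)*(y₁+y₂+y₃))) - (φ-1) * Real.exp (-((φ+1)*(y₁+y₂+y₃)))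
      < (φ+1) * a₂ - (φ-1) * b₂ :=
    exp_comb_anti (φ-1) (φ+1) y₂ (y₁+y₂+y₃) hp hpq h₂.le (by linarith)
  have hexpa : Real.exp (-((φ-1)*(y₁+y₂+y₃))) = a₁*a₂*a₃ := by
    rw [ha₁def, ha₂def, ha₃def, ← Real.exp_add, ← Real.exp_add]
    congr 1
    ring
  have hexpb : Real.exp (-((φ+1)*(y₁+y₂+y₃))) = b₁*b₂*b₃ := by
    rw [hb₁def, hb₂def, hb₃def, ← Real.exp_add, ← Real.exp_add]
    congr 1
    ring
  rw [hexpa, hexpb] at key2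
  have hneg1 : (φ+1)*(1-a₂)*(a₁-a₃) < 0 :=
    mul_neg_of_pos_of_neg (mul_pos (by linarith) (by linarith)) (by linarith)
  have hneg2 : (φ-1)*(1-b₂)*(b₁-b₃) < 0 :=
    mul_neg_of_pos_of_neg (mul_pos (by linarith) (by linarith)) (by linarith)
  linarith [E1, E2, key2, hneg1, hneg2]
end

section
/- Let J: H → ℝ be a functional on a function space on ℝ of the form J(u) = ∫_ℝ e^z G(u(z), u'(z)) dz for some integrand G, and let Ξ[a] denote translation (Ξ[a]u)(z) = u(z − a). Then for any u in the domain and any a ∈ ℝ with Ξ[a]u in the domain, J(Ξ[a]u) = e^a J(u). Consequently, if u is a critical point of J lying on a translation-invariant family of solutions with J differentiable along this family, then J(u) = 0. -/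
noncomputable def actionJ (G : ℝ → ℝ → ℝ) (u : ℝ → ℝ) : ℝ :=
  ∫ z : ℝ, Real.exp z * G (u z) (deriv u z)

theorem action_translation_scaling (G : ℝ → ℝ → ℝ) (u : ℝ → ℝ) :
    (∀ a : ℝ, actionJ G (fun z => u (z - a)) = Real.exp a * actionJ G u) ∧
    (deriv (fun a : ℝ => actionJ G (fun z => u (z - a))) 0 = 0 → actionJ G u = 0) := by
  have key : ∀ a : ℝ, actionJ G (fun z => u (z - a)) = Real.exp a * actionJ G u := by
    intro a
    unfold actionJ
    have hderiv : ∀ z : ℝ, deriv (fun z => u (z - a)) z = deriv u (z - a) := by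
      intro z
      simpa using deriv_comp_sub_const u a z
    calc ∫ z : ℝ, Real.exp z * G (u (z - a)) (deriv (fun z => u (z - a)) z)
        = ∫ z : ℝ, Real.exp a * (Real.exp (z - a) * G (u (z - a)) (deriv u (z - a))) := by
          congr 1; funext z
          rw [hderiv z, ← mul_assoc, ← Real.exp_add]
          ring_nf
      _ = Real.exp a * ∫ z : ℝ, (fun y => Real.exp y * G (u y) (deriv u y)) (z - a) := by
          rw [MeasureTheory.integral_const_mul]
      _ = Real.exp a * ∫ z : ℝ, Real.exp z * G (u z) (deriv u z) := by
          rw [MeasureTheory.integral_sub_right_eq_self (fun y => Real.exp y * G (u y) (deriv u y)) a]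
  refine ⟨key, fun h => ?_⟩
  have : deriv (fun a : ℝ => actionJ G (fun z => u (z - a))) 0
      = deriv (fun a : ℝ => Real.exp a * actionJ G u) 0 := by
    congr 1; funext a; exact key a
  rw [this] at h
  simpa using h
end
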